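/- Let s ∈ ℝ, 1 ≤ p ≤ ∞, and ε > 0. There exists a constant C = C(ε) such that for all nonzero u ∈ B^{s+ε}_{p,∞}(ℝ^d), ‖u‖_{B^s_{p,1}} ≤ C ‖u‖_{B^s_{p,∞}} · log(e + ‖u‖_{B^{s+ε}_{p,∞}} / ‖u‖_{B^s_{p,∞}}). -/

import Mathlib

open MeasureTheory ENNReal
open scoped FourierTransform

noncomputable section

variable {d : ℕ}

/-- The Littlewood–Paley blocks `Δ_j u` on `ℝ^d` (indexed so that `j : ℕ` corresponds to
the usual index `j - 1 ≥ -1`): `Δ_{-1} u = 𝓕⁻¹(χ 𝓕u)` and `Δ_j u = 𝓕⁻¹(φ(2⁻ʲ·) 𝓕u)`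
for `j ≥ 0`. -/
def lpBlock (χ φ : EuclideanSpace ℝ (Fin d) → ℝ)
    (u : EuclideanSpace ℝ (Fin d) → ℂ) : ℕ → EuclideanSpace ℝ (Fin d) → ℂ
  | 0 => 𝓕⁻ (fun ξ => (χ ξ : ℂ) * 𝓕 u ξ)
  | (j + 1) => 𝓕⁻ (fun ξ => (φ (((2:ℝ) ^ (-(j:ℝ))) • ξ) : ℂ) * 𝓕 u ξ)

/-- `(χ, φ)` is an admissible dyadic (Littlewood–Paley) pair on `ℝ^d`: smooth, valued in
`[0,1]`, with `χ` supported in the ball `{|ξ| ≤ 4/3}`, `φ` supported in the annulus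
`{3/4 ≤ |ξ| ≤ 8/3}`, and `χ(ξ) + Σ_{j≥0} φ(2⁻ʲξ) = 1`. -/
structure IsLPPair (χ φ : EuclideanSpace ℝ (Fin d) → ℝ) : Prop where
  smooth_chi : ContDiff ℝ (⊤ : ℕ∞) χ
  smooth_phi : ContDiff ℝ (⊤ : ℕ∞) φ
  range_chi : ∀ ξ, χ ξ ∈ Set.Icc (0:ℝ) 1
  range_phi : ∀ ξ, φ ξ ∈ Set.Icc (0:ℝ) 1
  supp_chi : ∀ ξ, 4 / 3 ≤ ‖ξ‖ → χ ξ = 0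
  supp_phi : ∀ ξ, ‖ξ‖ < 3 / 4 ∨ 8 / 3 < ‖ξ‖ → φ ξ = 0
  sum_one : ∀ ξ, χ ξ + ∑' j : ℕ, φ (((2:ℝ) ^ (-(j:ℝ))) • ξ) = 1

/-- The `ℓ^r` norm (for `r ∈ [1,∞]`) of a sequence of extended nonnegative reals. -/
def seqNorm (r : ℝ≥0∞) (c : ℕ → ℝ≥0∞) : ℝ≥0∞ :=
  if r = ∞ then ⨆ j, c j else (∑' j, c j ^ r.toReal) ^ (1 / r.toReal)

/-- The nonhomogeneous Besov norm
`‖u‖_{B^s_{p,r}} = ‖(2^{js} ‖Δ_j u‖_{L^p})_{j ≥ -1}‖_{ℓ^r}` on `ℝ^d`. -/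
def besovNorm (χ φ : EuclideanSpace ℝ (Fin d) → ℝ) (s : ℝ) (p r : ℝ≥0∞)
    (u : EuclideanSpace ℝ (Fin d) → ℂ) : ℝ≥0∞ :=
  seqNorm r (fun j =>
    (2:ℝ≥0∞) ^ (((j:ℝ) - 1) * s) * eLpNorm (lpBlock χ φ u j) p volume)

private lemma seq_log_interp (ε : ℝ) (hε : 0 < ε) :
    ∃ C : ℝ, 0 < C ∧ ∀ a : ℕ → ℝ≥0∞,
      (⨆ j : ℕ, (2:ℝ≥0∞) ^ (((j:ℝ) - 1) * ε) * a j) < ∞ →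
      ∑' j, a j ≤ ENNReal.ofReal (C * (⨆ j : ℕ, a j).toReal *
        Real.log (Real.exp 1 +
          (⨆ j : ℕ, (2:ℝ≥0∞) ^ (((j:ℝ) - 1) * ε) * a j).toReal / (⨆ j : ℕ, a j).toReal)) := by
  have hlog2 : (0:ℝ) < Real.log 2 := Real.log_pos one_lt_two
  have hεl : (0:ℝ) < ε * Real.log 2 := mul_pos hε hlog2
  set t : ℝ := (2:ℝ) ^ (-ε) with ht_def
  have ht0 : 0 < t := Real.rpow_pos_of_pos two_pos _
  have ht1 : t < 1 := Real.rpow_lt_one_of_one_lt_of_neg one_lt_two (by linarith)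
  set g : ℝ := (1 - t)⁻¹ with hg_def
  have hg : 0 < g := inv_pos.mpr (by linarith)
  refine ⟨1 / (ε * Real.log 2) + 2 + g, by positivity, fun a hY => ?_⟩
  set X := ⨆ j : ℕ, a j with hX_def
  set Y := ⨆ j : ℕ, (2:ℝ≥0∞) ^ (((j:ℝ) - 1) * ε) * a j with hY_def
  have a_le_X : ∀ j, a j ≤ X := fun j => le_iSup a j
  have b_le_Y : ∀ j : ℕ, (2:ℝ≥0∞) ^ (((j:ℝ) - 1) * ε) * a j ≤ Y := fun j =>
    le_iSup (fun j : ℕ => (2:ℝ≥0∞) ^ (((j:ℝ) - 1) * ε) * a j) j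
  have hA : ∀ j : ℕ, a j ≤ (2:ℝ≥0∞) ^ (-(((j:ℝ) - 1) * ε)) * Y := by
    intro j
    calc a j = (2:ℝ≥0∞) ^ (-(((j:ℝ) - 1) * ε)) * ((2:ℝ≥0∞) ^ (((j:ℝ) - 1) * ε) * a j) := by
          rw [← mul_assoc, ← ENNReal.rpow_add _ _ two_ne_zero ENNReal.ofNat_ne_top]
          simp
      _ ≤ _ := mul_le_mul_right (b_le_Y j) _
  have hX_le : X ≤ (2:ℝ≥0∞) ^ ε * Y := by
    refine iSup_le fun j => (hA j).trans (mul_le_mul_left ?_ _)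
    refine ENNReal.rpow_le_rpow_of_exponent_le one_le_two ?_
    have : (0:ℝ) ≤ (j:ℝ) := Nat.cast_nonneg j
    nlinarith
  have hX_fin : X ≠ ∞ := by
    refine (lt_of_le_of_lt hX_le (ENNReal.mul_lt_top ?_ hY)).ne
    exact ENNReal.rpow_lt_top_of_nonneg hε.le ENNReal.ofNat_ne_top
  rcases eq_or_ne X 0 with hX0 | hX0
  · have : ∑' j, a j = 0 := ENNReal.tsum_eq_zero.mpr fun j =>
      le_antisymm ((a_le_X j).trans hX0.le) (zero_le)
    rw [this]; exact zero_le
  have hYX : (2:ℝ≥0∞) ^ (-ε) * X ≤ Y := by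
    rw [hX_def, ENNReal.mul_iSup]
    refine iSup_le fun j => le_trans (mul_le_mul_left ?_ _) (b_le_Y j)
    refine ENNReal.rpow_le_rpow_of_exponent_le one_le_two ?_
    have : (0:ℝ) ≤ (j:ℝ) := Nat.cast_nonneg j
    nlinarith
  have hY0 : Y ≠ 0 := by
    intro h
    rw [h, le_zero_iff, mul_eq_zero] at hYX
    rcases hYX with h' | h'
    · exact (ENNReal.rpow_eq_zero_iff.mp h').elim
        (fun ⟨h2, _⟩ => two_ne_zero h2) (fun ⟨h2, _⟩ => ENNReal.ofNat_ne_top h2)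
    · exact hX0 h'
  set x := X.toReal with hx_def
  set y := Y.toReal with hy_def
  have hx : 0 < x := ENNReal.toReal_pos hX0 hX_fin
  have hy : 0 < y := ENNReal.toReal_pos hY0 hY.ne
  set q : ℝ := Real.log (y / x) / (ε * Real.log 2) with hq_def
  set m : ℝ := max q 0 with hm_def
  set N : ℕ := ⌈m⌉₊ + 1 with hN_def
  set n : ℝ := (⌈m⌉₊ : ℝ) with hn_def
  have hmn : n < m + 1 := Nat.ceil_lt_add_one (le_max_right _ _)
  have hqn : q ≤ n := (le_max_left _ _).trans (Nat.le_ceil m)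
  -- key real inequality
  have hkey : y / x ≤ (2:ℝ) ^ (n * ε) := by
    rw [← Real.log_le_log_iff (div_pos hy hx) (Real.rpow_pos_of_pos two_pos _),
      Real.log_rpow two_pos]
    rw [hq_def, div_le_iff₀ hεl] at hqn
    nlinarith
  have hyx : y ≤ (2:ℝ) ^ (n * ε) * x := by rwa [div_le_iff₀ hx] at hkey
  have hreal : (2:ℝ) ^ (-(n * ε)) * y ≤ x := by
    calc (2:ℝ) ^ (-(n * ε)) * y ≤ (2:ℝ) ^ (-(n * ε)) * ((2:ℝ) ^ (n * ε) * x) :=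
          mul_le_mul_of_nonneg_left hyx (Real.rpow_nonneg two_pos.le _)
      _ = x := by rw [← mul_assoc, ← Real.rpow_add two_pos]; simp
  have h2e : (2:ℝ≥0∞) = ENNReal.ofReal 2 := by simp
  have hTail1 : (2:ℝ≥0∞) ^ (-(n * ε)) * Y ≤ X := by
    rw [← ENNReal.ofReal_toReal hX_fin, ← ENNReal.ofReal_toReal hY.ne, h2e,
      ENNReal.ofReal_rpow_of_pos two_pos, ← ENNReal.ofReal_mul (Real.rpow_nonneg two_pos.le _)]
    exact ENNReal.ofReal_le_ofReal hreal
  have hG : (1 - (2:ℝ≥0∞) ^ (-ε))⁻¹ = ENNReal.ofReal g := by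
    rw [hg_def, ENNReal.ofReal_inv_of_pos (by linarith : (0:ℝ) < 1 - t),
      ENNReal.ofReal_sub _ ht0.le, ht_def, ← ENNReal.ofReal_rpow_of_pos two_pos, ← h2e,
      ENNReal.ofReal_one]
  -- the splitting
  have prefix_bound : ∑ j ∈ Finset.range N, a j ≤ (N : ℝ≥0∞) * X := by
    calc ∑ j ∈ Finset.range N, a j ≤ ∑ _j ∈ Finset.range N, X :=
          Finset.sum_le_sum fun j _ => a_le_X j
      _ = (N : ℝ≥0∞) * X := by simp [Finset.sum_const, nsmul_eq_mul]
  have tail_bound : ∑' k, a (k + N) ≤ ENNReal.ofReal g * X := by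
    calc ∑' k, a (k + N)
        ≤ ∑' k : ℕ, ((2:ℝ≥0∞) ^ (-ε)) ^ k * ((2:ℝ≥0∞) ^ (-(n * ε)) * Y) := by
          refine ENNReal.tsum_le_tsum fun k => (hA (k + N)).trans (le_of_eq ?_)
          rw [← mul_assoc, ← ENNReal.rpow_natCast ((2:ℝ≥0∞) ^ (-ε)) k,
            ← ENNReal.rpow_mul, ← ENNReal.rpow_add _ _ two_ne_zero ENNReal.ofNat_ne_top]
          congr 1
          push_cast [hN_def, hn_def]
          ring
      _ = (1 - (2:ℝ≥0∞) ^ (-ε))⁻¹ * ((2:ℝ≥0∞) ^ (-(n * ε)) * Y) := by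
          rw [ENNReal.tsum_mul_right, ENNReal.tsum_geometric]
      _ ≤ ENNReal.ofReal g * X := by rw [hG]; exact mul_le_mul_right hTail1 _
  set L : ℝ := Real.log (Real.exp 1 + y / x) with hL_def
  have hL1 : 1 ≤ L := by
    rw [hL_def, Real.le_log_iff_exp_le (by positivity)]
    exact le_add_of_nonneg_right (by positivity)
  have hmL : m ≤ L / (ε * Real.log 2) := by
    refine max_le ?_ (by positivity)
    rw [hq_def, div_le_div_iff_of_pos_right hεl]
    calc Real.log (y / x) ≤ Real.log (Real.exp 1 + y / x) :=
          Real.log_le_log (div_pos hy hx) (le_add_of_nonneg_left (Real.exp_pos 1).le)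
      _ = L := rfl
  calc ∑' j, a j = ∑ j ∈ Finset.range N, a j + ∑' k, a (k + N) :=
        (Summable.sum_add_tsum_nat_add' ENNReal.summable).symm
    _ ≤ (N : ℝ≥0∞) * X + ENNReal.ofReal g * X := add_le_add prefix_bound tail_bound
    _ = ENNReal.ofReal (((N : ℝ) + g) * x) := by
        rw [← ENNReal.ofReal_toReal hX_fin, ← ENNReal.ofReal_natCast,
          ← ENNReal.ofReal_mul (Nat.cast_nonneg N), ← ENNReal.ofReal_mul hg.le,
          ← ENNReal.ofReal_add (by positivity) (by positivity), add_mul]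
    _ ≤ _ := by
        refine ENNReal.ofReal_le_ofReal ?_
        have hN : (N : ℝ) ≤ m + 2 := by
          rw [hN_def]; push_cast; linarith
        have h1 : m + 2 + g ≤ (1 / (ε * Real.log 2) + 2 + g) * L := by
          have hml : m ≤ 1 / (ε * Real.log 2) * L := by
            rw [one_div, inv_mul_eq_div]; exact hmL
          nlinarith [hg.le, mul_le_mul_of_nonneg_left hL1 hg.le]
        calc ((N : ℝ) + g) * x ≤ ((1 / (ε * Real.log 2) + 2 + g) * L) * x := by
              apply mul_le_mul_of_nonneg_right _ hx.le
              linarith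
          _ = (1 / (ε * Real.log 2) + 2 + g) * x * L := by ring

/-- Logarithmic interpolation inequality:
`‖u‖_{B^s_{p,1}} ≤ C ‖u‖_{B^s_{p,∞}} log(e + ‖u‖_{B^{s+ε}_{p,∞}} / ‖u‖_{B^s_{p,∞}})`. -/
theorem besov_log_interpolation (d : ℕ) (χ φ : EuclideanSpace ℝ (Fin d) → ℝ)
    (hLP : IsLPPair χ φ) (s : ℝ) (p : ℝ≥0∞) (hp : 1 ≤ p) (ε : ℝ) (hε : 0 < ε) :
    ∃ C : ℝ, 0 < C ∧
      ∀ u : EuclideanSpace ℝ (Fin d) → ℂ, u ≠ 0 →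
        besovNorm χ φ (s + ε) p ∞ u < ∞ →
        besovNorm χ φ s p 1 u
          ≤ ENNReal.ofReal (C * (besovNorm χ φ s p ∞ u).toReal *
              Real.log (Real.exp 1 +
                (besovNorm χ φ (s + ε) p ∞ u).toReal /
                  (besovNorm χ φ s p ∞ u).toReal)) := by
  obtain ⟨C, hC, h⟩ := seq_log_interp ε hε
  refine ⟨C, hC, fun u _ hfin => ?_⟩
  have key : ∀ j : ℕ, (2:ℝ≥0∞) ^ (((j:ℝ) - 1) * (s + ε)) * eLpNorm (lpBlock χ φ u j) p volume
      = (2:ℝ≥0∞) ^ (((j:ℝ) - 1) * ε) *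
        ((2:ℝ≥0∞) ^ (((j:ℝ) - 1) * s) * eLpNorm (lpBlock χ φ u j) p volume) := by
    intro j
    rw [← mul_assoc, ← ENNReal.rpow_add _ _ two_ne_zero ENNReal.ofNat_ne_top]
    ring_nf
  have e1 : besovNorm χ φ s p 1 u
      = ∑' j : ℕ, (2:ℝ≥0∞) ^ (((j:ℝ) - 1) * s) * eLpNorm (lpBlock χ φ u j) p volume := by
    simp [besovNorm, seqNorm]
  have e2 : besovNorm χ φ s p ∞ u
      = ⨆ j : ℕ, (2:ℝ≥0∞) ^ (((j:ℝ) - 1) * s) * eLpNorm (lpBlock χ φ u j) p volume := by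
    simp [besovNorm, seqNorm]
  have e3 : besovNorm χ φ (s + ε) p ∞ u
      = ⨆ j : ℕ, (2:ℝ≥0∞) ^ (((j:ℝ) - 1) * ε) *
          ((2:ℝ≥0∞) ^ (((j:ℝ) - 1) * s) * eLpNorm (lpBlock χ φ u j) p volume) := by
    simp only [besovNorm, seqNorm, if_pos rfl]
    exact iSup_congr key
  rw [e1, e2, e3]
  rw [e3] at hfin
  exact h _ hfin
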